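/- arXiv:2010.02228 — 4 statements merged into one kernel-verified Lean document; each statement's English description precedes it below -/
import Mathlib

section
/- Let m be an even positive integer and let A_1, …, A_m be N×N complex matrices. Then the fully antisymmetrized trace vanishes: ∑_{σ ∈ S_m} sgn(σ) · tr(A_{σ(1)} A_{σ(2)} ⋯ A_{σ(m)}) = 0. (Consequently the winding-number density, and hence the winding number W[V], is identically zero in even total dimension d+D.) -/
/-!
The cyclic rotation of `Fin m` is a permutation of sign `(-1)^(m-1) = -1` for even `m`, while
cyclicity of the trace makes each summand's trace invariant under precomposing `σ` with it.
Reindexing the sum by `σ ↦ σ * finRotate m` therefore negates it, so twice the sum vanishes.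
-/

theorem List.ofFn_comp_finRotate {α} {n : ℕ} (f : Fin n → α) :
    List.ofFn (f ∘ finRotate n) = (List.ofFn f).rotate 1 := by
  cases n with
  | zero => simp
  | succ n =>
    rw [List.ofFn_succ' (f ∘ _), List.ofFn_succ (f := f), List.rotate_cons_succ, List.rotate_zero,
      List.concat_eq_append]
    simp [Fin.coeSucc_eq_succ]

theorem Matrix.trace_prod_rotate {n R : Type*} [Fintype n] [DecidableEq n] [CommSemiring R]
    (l : List (Matrix n n R)) (k : ℕ) : (l.rotate k).prod.trace = l.prod.trace := by
  induction k generalizing l with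
  | zero => rw [List.rotate_zero]
  | succ k ih =>
    cases l with
    | nil => rw [List.rotate_nil]
    | cons a l => rw [List.rotate_cons_succ, ih, List.prod_append, List.prod_singleton,
        List.prod_cons, trace_mul_comm]

theorem Equiv.Perm.sum_sign_mul_eq_zero_of_mul_right_invariant {α R : Type*} [Fintype α]
    [DecidableEq α] [Ring R] [IsAddTorsionFree R] (f : Equiv.Perm α → R) (τ : Equiv.Perm α)
    (hτ : Equiv.Perm.sign τ = -1) (hf : ∀ σ, f (σ * τ) = f σ) :
    ∑ σ, ((Equiv.Perm.sign σ : ℤ) : R) * f σ = 0 := by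
  set S := ∑ σ, ((Equiv.Perm.sign σ : ℤ) : R) * f σ
  have hS : S = -S := calc
    S = ∑ σ, ((Equiv.Perm.sign (σ * τ) : ℤ) : R) * f (σ * τ) :=
      (Equiv.sum_comp (Equiv.mulRight τ) _).symm
    _ = -S := by simp [hτ, hf, Finset.sum_neg_distrib, S]
  exact self_eq_neg.mp hS

/-- For an even number `m` of `N×N` complex matrices, the fully antisymmetrized trace
`∑_{σ ∈ S_m} sgn(σ) · tr(A_{σ(1)} ⋯ A_{σ(m)})` vanishes.  (This is the algebraic fact
underlying the vanishing of the winding-number density, and hence of the winding number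
`W[V]`, in even total dimension `d+D`.) -/
theorem antisymmetrized_trace_vanishes_of_even {N m : ℕ} (hm : 0 < m) (hme : Even m)
    (A : Fin m → Matrix (Fin N) (Fin N) ℂ) :
    ∑ σ : Equiv.Perm (Fin m),
      ((Equiv.Perm.sign σ : ℤ) : ℂ) * Matrix.trace (List.ofFn fun i => A (σ i)).prod = 0 := by
  refine Equiv.Perm.sum_sign_mul_eq_zero_of_mul_right_invariant _ (finRotate m) ?_ fun σ => ?_
  · rw [sign_finRotate, (Nat.Even.sub_odd hm hme odd_one).neg_one_pow]
  · change (List.ofFn ((A ∘ σ) ∘ finRotate m)).prod.trace = (List.ofFn (A ∘ σ)).prod.trace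
    rw [List.ofFn_comp_finRotate, Matrix.trace_prod_rotate]
end

section
/- Let V : ℝ^3 → Matrix (Fin N) (Fin N) ℂ be twice continuously differentiable with V(θ) unitary for every θ, and define ñ_j(θ) = −i V(θ)† ∂_j V(θ) for j = 1,2,3. Then pointwise on ℝ^3: tr(ñ_1 ∂_2 ñ_3) = ∂_3 tr(ñ_1 ñ_2) − tr(ñ_2 ∂_3 ñ_1) − i · tr(ñ_1 (ñ_2 ñ_3 − ñ_3 ñ_2)). -/
/-!
Differentiating `Vᴴ V = 1` shows that `Vᴴ ∂ⱼV` is skew-Hermitian, hence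
`ñₐ ñ_b = (∂ₐV)ᴴ ∂_bV`. Together with the symmetry of second derivatives this gives the
flatness of `ñ` as a connection: `∂ₐ ñ_b − ∂_b ñₐ = −i [ñₐ, ñ_b]`. Substituting this for
`∂₂ ñ₃` and expanding `∂₃ tr(ñ₁ ñ₂)` by the product rule, the identity reduces to the
cyclicity of the trace. The coordinates `1, 2, 3` are `0, 1, 2 : Fin 3`.
-/

open Matrix
open scoped Matrix.Norms.L2Operator

/-- Partial derivative in the `j`-th coordinate of a matrix-valued function on `ℝ^m`. -/
noncomputable def matPderiv {N m : ℕ} (j : Fin m)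
    (V : (Fin m → ℝ) → Matrix (Fin N) (Fin N) ℂ) (θ : Fin m → ℝ) :
    Matrix (Fin N) (Fin N) ℂ :=
  deriv (fun s => V (Function.update θ j s)) (θ j)

/-- Partial derivative in the `j`-th coordinate of a scalar function on `ℝ^m`. -/
noncomputable def scalPderiv {m : ℕ} (j : Fin m) (f : (Fin m → ℝ) → ℂ) (θ : Fin m → ℝ) : ℂ :=
  deriv (fun s => f (Function.update θ j s)) (θ j)

/-- The connection-like matrix `ñ_j(θ) = −i V(θ)† ∂_j V(θ)`. -/
noncomputable def ntilde {N m : ℕ} (V : (Fin m → ℝ) → Matrix (Fin N) (Fin N) ℂ)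
    (j : Fin m) (θ : Fin m → ℝ) : Matrix (Fin N) (Fin N) ℂ :=
  (-Complex.I) • ((V θ)ᴴ * matPderiv j V θ)
section PartialDerivatives

variable {N m : ℕ} (j : Fin m) {θ : Fin m → ℝ}

theorem hasDerivAt_comp_update_fderiv {F : Type*} [NormedAddCommGroup F] [NormedSpace ℝ F]
    {f : (Fin m → ℝ) → F} (hf : DifferentiableAt ℝ f θ) :
    HasDerivAt (fun s => f (Function.update θ j s)) (fderiv ℝ f θ (Pi.single j 1)) (θ j) := by
  have hf' : HasFDerivAt f (fderiv ℝ f θ) (Function.update θ j (θ j)) := by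
    rw [Function.update_eq_self]; exact hf.hasFDerivAt
  exact hf'.comp_hasDerivAt _ (hasDerivAt_update θ j (θ j))

theorem DifferentiableAt.conjTranspose {E : Type*} [NormedAddCommGroup E] [NormedSpace ℝ E]
    {A : E → Matrix (Fin N) (Fin N) ℂ} {x : E} (hA : DifferentiableAt ℝ A x) :
    DifferentiableAt ℝ (fun y => (A y)ᴴ) x :=
  hA.star

variable {A B V : (Fin m → ℝ) → Matrix (Fin N) (Fin N) ℂ}

theorem matPderiv_eq_fderiv (hA : DifferentiableAt ℝ A θ) :
    matPderiv j A θ = fderiv ℝ A θ (Pi.single j 1) :=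
  (hasDerivAt_comp_update_fderiv j hA).deriv

theorem hasDerivAt_matPderiv (hA : DifferentiableAt ℝ A θ) :
    HasDerivAt (fun s => A (Function.update θ j s)) (matPderiv j A θ) (θ j) := by
  rw [matPderiv_eq_fderiv j hA]
  exact hasDerivAt_comp_update_fderiv j hA

theorem matPderiv_const (C : Matrix (Fin N) (Fin N) ℂ) : matPderiv j (fun _ => C) θ = 0 :=
  deriv_const _ C

theorem matPderiv_mul (hA : DifferentiableAt ℝ A θ) (hB : DifferentiableAt ℝ B θ) :
    matPderiv j (fun θ' => A θ' * B θ') θ = matPderiv j A θ * B θ + A θ * matPderiv j B θ := by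
  have h := (hasDerivAt_matPderiv j hA).mul (hasDerivAt_matPderiv j hB)
  rw [Function.update_eq_self] at h
  exact h.deriv

theorem matPderiv_conjTranspose (hA : DifferentiableAt ℝ A θ) :
    matPderiv j (fun θ' => (A θ')ᴴ) θ = (matPderiv j A θ)ᴴ :=
  (hasDerivAt_matPderiv j hA).star.deriv

theorem matPderiv_const_smul (c : ℂ) (hA : DifferentiableAt ℝ A θ) :
    matPderiv j (fun θ' => c • A θ') θ = c • matPderiv j A θ :=
  ((hasDerivAt_matPderiv j hA).const_smul c).deriv

theorem scalPderiv_trace (hA : DifferentiableAt ℝ A θ) :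
    scalPderiv j (fun θ' => trace (A θ')) θ = trace (matPderiv j A θ) :=
  ((traceLinearMap (Fin N) ℝ ℂ).toContinuousLinearMap.hasFDerivAt.comp_hasDerivAt _
    (hasDerivAt_matPderiv j hA)).deriv

theorem scalPderiv_trace_mul (hA : DifferentiableAt ℝ A θ) (hB : DifferentiableAt ℝ B θ) :
    scalPderiv j (fun θ' => trace (A θ' * B θ')) θ
      = trace (matPderiv j A θ * B θ) + trace (A θ * matPderiv j B θ) := by
  rw [scalPderiv_trace (A := fun θ' => A θ' * B θ') j (hA.mul hB), matPderiv_mul j hA hB, trace_add]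

theorem matPderiv_eq_fderiv_apply (hV : Differentiable ℝ V) :
    matPderiv j V = fun θ' => fderiv ℝ V θ' (Pi.single j 1) :=
  funext fun θ' => matPderiv_eq_fderiv j (hV θ')

theorem ContDiff.differentiable_matPderiv (hV : ContDiff ℝ 2 V) :
    Differentiable ℝ (matPderiv j V) := by
  rw [matPderiv_eq_fderiv_apply j (hV.differentiable two_ne_zero)]
  exact ((hV.fderiv_right le_rfl).differentiable one_ne_zero).clm_apply (differentiable_const _)

theorem matPderiv_matPderiv_comm (hV : ContDiff ℝ 2 V) (a b : Fin m) (θ : Fin m → ℝ) :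
    matPderiv a (matPderiv b V) θ = matPderiv b (matPderiv a V) θ := by
  have hV₁ : Differentiable ℝ V := hV.differentiable two_ne_zero
  have hV₂ : Differentiable ℝ (fderiv ℝ V) := (hV.fderiv_right le_rfl).differentiable one_ne_zero
  have hsecond : ∀ a b : Fin m, matPderiv a (matPderiv b V) θ
      = fderiv ℝ (fderiv ℝ V) θ (Pi.single a 1) (Pi.single b 1) := by
    intro a b
    rw [matPderiv_eq_fderiv a (hV.differentiable_matPderiv b θ), matPderiv_eq_fderiv_apply b hV₁,
      fderiv_clm_apply (hV₂ θ) (differentiableAt_const _)]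
    simp
  rw [hsecond, hsecond]
  exact second_derivative_symmetric (fun y => (hV₁ y).hasFDerivAt) (hV₂ θ).hasFDerivAt _ _

end PartialDerivatives

section Unitary

variable {N m : ℕ} {V : (Fin m → ℝ) → Matrix (Fin N) (Fin N) ℂ} {θ : Fin m → ℝ}

theorem conjTranspose_mul_matPderiv_of_unitary (j : Fin m) (hunit : ∀ θ, (V θ)ᴴ * V θ = 1)
    (hV : DifferentiableAt ℝ V θ) :
    (V θ)ᴴ * matPderiv j V θ = -((matPderiv j V θ)ᴴ * V θ) := by
  have h := matPderiv_mul j hV.conjTranspose hV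
  simp only [hunit, matPderiv_const, matPderiv_conjTranspose j hV] at h
  exact eq_neg_of_add_eq_zero_right h.symm

theorem ntilde_mul_ntilde (hunit : ∀ θ, (V θ)ᴴ * V θ = 1) (hV : DifferentiableAt ℝ V θ)
    (a b : Fin m) :
    ntilde V a θ * ntilde V b θ = (matPderiv a V θ)ᴴ * matPderiv b V θ := by
  have hU : V θ * (V θ)ᴴ = 1 := mul_eq_one_comm.mp (hunit θ)
  calc ntilde V a θ * ntilde V b θ
      = -((V θ)ᴴ * matPderiv a V θ * ((V θ)ᴴ * matPderiv b V θ)) := by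
        simp [ntilde, smul_smul]
    _ = (matPderiv a V θ)ᴴ * (V θ * (V θ)ᴴ) * matPderiv b V θ := by
        rw [conjTranspose_mul_matPderiv_of_unitary a hunit hV]; noncomm_ring
    _ = (matPderiv a V θ)ᴴ * matPderiv b V θ := by rw [hU, mul_one]

theorem matPderiv_ntilde {a b : Fin m} (hV : DifferentiableAt ℝ V θ)
    (hVb : DifferentiableAt ℝ (matPderiv b V) θ) :
    matPderiv a (ntilde V b) θ
      = (-Complex.I) • ((matPderiv a V θ)ᴴ * matPderiv b V θ
          + (V θ)ᴴ * matPderiv a (matPderiv b V) θ) := by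
  unfold ntilde
  rw [matPderiv_const_smul (A := fun θ' => (V θ')ᴴ * matPderiv b V θ') a _
      (hV.conjTranspose.mul hVb), matPderiv_mul a hV.conjTranspose hVb,
    matPderiv_conjTranspose a hV]

theorem ContDiff.differentiable_ntilde (hV : ContDiff ℝ 2 V) (j : Fin m) :
    Differentiable ℝ (ntilde V j) := by
  unfold ntilde
  exact fun θ => ((hV.differentiable two_ne_zero θ).conjTranspose.mul
    (hV.differentiable_matPderiv j θ)).const_smul (-Complex.I)

theorem matPderiv_ntilde_sub_matPderiv_ntilde (hV : ContDiff ℝ 2 V)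
    (hunit : ∀ θ, (V θ)ᴴ * V θ = 1) (a b : Fin m) (θ : Fin m → ℝ) :
    matPderiv a (ntilde V b) θ - matPderiv b (ntilde V a) θ
      = (-Complex.I) • (ntilde V a θ * ntilde V b θ - ntilde V b θ * ntilde V a θ) := by
  have hV₁ := hV.differentiable two_ne_zero θ
  rw [matPderiv_ntilde hV₁ (hV.differentiable_matPderiv b θ),
    matPderiv_ntilde hV₁ (hV.differentiable_matPderiv a θ), ntilde_mul_ntilde hunit hV₁,
    ntilde_mul_ntilde hunit hV₁, matPderiv_matPderiv_comm hV a b, ← smul_sub]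
  abel_nf

end Unitary

/-- For a twice continuously differentiable unitary-valued map `V` on `ℝ³`, with
`ñ_j = −i V†∂_j V` (indices `1,2,3` realized as `0,1,2 : Fin 3`), pointwise:
`tr(ñ₁ ∂₂ ñ₃) = ∂₃ tr(ñ₁ ñ₂) − tr(ñ₂ ∂₃ ñ₁) − i tr(ñ₁ [ñ₂, ñ₃])`. -/
theorem trace_ntilde_pderiv_identity {N : ℕ}
    (V : (Fin 3 → ℝ) → Matrix (Fin N) (Fin N) ℂ)
    (hV : ContDiff ℝ 2 V)
    (hunit : ∀ θ, (V θ)ᴴ * V θ = 1) :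
    ∀ θ : Fin 3 → ℝ,
      Matrix.trace (ntilde V 0 θ * matPderiv 1 (ntilde V 2) θ)
        = scalPderiv 2 (fun θ' => Matrix.trace (ntilde V 0 θ' * ntilde V 1 θ')) θ
          - Matrix.trace (ntilde V 1 θ * matPderiv 2 (ntilde V 0) θ)
          - Complex.I * Matrix.trace
              (ntilde V 0 θ * (ntilde V 1 θ * ntilde V 2 θ - ntilde V 2 θ * ntilde V 1 θ)) := by
  intro θ
  rw [eq_add_of_sub_eq (matPderiv_ntilde_sub_matPderiv_ntilde hV hunit 1 2 θ),
    scalPderiv_trace_mul 2 (hV.differentiable_ntilde 0 θ) (hV.differentiable_ntilde 1 θ),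
    trace_mul_comm (matPderiv 2 (ntilde V 0) θ)]
  simp only [mul_add, trace_add, mul_smul_comm, trace_smul, smul_eq_mul]
  ring
end

section
/- Let U : ℝ × ℝ → Matrix (Fin N) (Fin N) ℂ be twice continuously differentiable with U(t,θ) unitary for all (t,θ), and define H(t,θ) = i (∂_t U)(t,θ) · U(t,θ)†. Then H(t,θ) is Hermitian and the following identity holds pointwise: −U† (∂_θ H) U = −i ∂_θ (U† ∂_t U) + i ( (∂_θ U†)(∂_t U) − (∂_t U†)(∂_θ U) ). (The instantaneous pumped power operator equals a total derivative plus a Berry-curvature term.) -/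
/-!
Differentiating `U†U = 1` along either variable shows that `U†∂ₜU` and `U†∂_θU` are
skew-adjoint. Hence `∂ₜU U† = U (U†∂ₜU) U†` is skew-adjoint too and `H = i ∂ₜU U†` is Hermitian.
Differentiating `H` in `θ` and conjugating by `U` produces `U†(∂_θ∂ₜU)`, which is part of
`∂_θ(U†∂ₜU)`, and `U†(∂ₜU)(∂_θU†)U`, which the two skew-adjointness relations turn into
`(∂ₜU†)(∂_θU)`; what remains is an identity between linear combinations of these products.
-/

open Matrix
open scoped Matrix.Norms.L2Operator

/-- Partial derivative in the first argument (time) of a matrix-valued function on `ℝ × ℝ`. -/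
noncomputable def pdT {N : ℕ} (U : ℝ × ℝ → Matrix (Fin N) (Fin N) ℂ) (p : ℝ × ℝ) :
    Matrix (Fin N) (Fin N) ℂ :=
  deriv (fun s => U (s, p.2)) p.1

/-- Partial derivative in the second argument (phase) of a matrix-valued function on `ℝ × ℝ`. -/
noncomputable def pdTheta {N : ℕ} (U : ℝ × ℝ → Matrix (Fin N) (Fin N) ℂ) (p : ℝ × ℝ) :
    Matrix (Fin N) (Fin N) ℂ :=
  deriv (fun s => U (p.1, s)) p.2

/-- The Hamiltonian `H = i (∂ₜ U) U†` generating the unitary family `U`. -/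
noncomputable def genHam {N : ℕ} (U : ℝ × ℝ → Matrix (Fin N) (Fin N) ℂ) (p : ℝ × ℝ) :
    Matrix (Fin N) (Fin N) ℂ :=
  Complex.I • (pdT U p * (U p)ᴴ)

section PartialDerivatives

variable {N : ℕ} {U V : ℝ × ℝ → Matrix (Fin N) (Fin N) ℂ} {p : ℝ × ℝ}

theorem hasDerivAt_pdT (h : DifferentiableAt ℝ U p) :
    HasDerivAt (fun t => U (t, p.2)) (pdT U p) p.1 :=
  (h.comp p.1 (differentiableAt_id.prodMk (differentiableAt_const _))).hasDerivAt

theorem hasDerivAt_pdTheta (h : DifferentiableAt ℝ U p) :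
    HasDerivAt (fun θ => U (p.1, θ)) (pdTheta U p) p.2 :=
  (h.comp p.2 ((differentiableAt_const _).prodMk differentiableAt_id)).hasDerivAt

theorem contDiff_pdT {m n : WithTop ℕ∞} (hU : ContDiff ℝ n U) (hmn : m + 1 ≤ n) :
    ContDiff ℝ m (pdT U) := by
  have hUd : Differentiable ℝ U :=
    hU.differentiable (ne_bot_of_le_ne_bot (by simp) hmn)
  have hpdT : pdT U = fun q => fderiv ℝ U q (1, 0) := by
    funext q
    exact ((hUd q).hasFDerivAt.comp_hasDerivAt q.1
      ((hasDerivAt_id _).prodMk (hasDerivAt_const _ _))).deriv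
  rw [hpdT]
  exact (hU.fderiv_right hmn).clm_apply contDiff_const

theorem pdT_conjTranspose : pdT (fun q => (U q)ᴴ) p = (pdT U p)ᴴ := deriv.star

theorem pdTheta_conjTranspose : pdTheta (fun q => (U q)ᴴ) p = (pdTheta U p)ᴴ := deriv.star

theorem pdTheta_mul (hU : DifferentiableAt ℝ U p) (hV : DifferentiableAt ℝ V p) :
    pdTheta (fun q => U q * V q) p = pdTheta U p * V p + U p * pdTheta V p :=
  ((hasDerivAt_pdTheta hU).mul (hasDerivAt_pdTheta hV)).deriv

theorem pdTheta_genHam (hU : DifferentiableAt ℝ U p) (hA : DifferentiableAt ℝ (pdT U) p) :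
    pdTheta (genHam U) p =
      Complex.I • (pdTheta (pdT U) p * (U p)ᴴ + pdT U p * (pdTheta U p)ᴴ) :=
  (((hasDerivAt_pdTheta hA).mul (hasDerivAt_pdTheta hU).star).const_smul Complex.I).deriv

end PartialDerivatives

section StarRing

variable {R : Type*} [Ring R] [StarRing R] {u a b : R}

theorem mul_star_mem_skewAdjoint_of_star_mul (hu : u * star u = 1)
    (ha : star u * a ∈ skewAdjoint R) : a * star u ∈ skewAdjoint R := by
  have hconj : a * star u = u * (star u * a) * star u := by
    rw [← mul_assoc, hu, one_mul]
  exact hconj ▸ skewAdjoint.conjugate ha u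

theorem star_mul_mul_star_mul_eq (hu : u * star u = 1) (ha : star u * a ∈ skewAdjoint R)
    (hb : star u * b ∈ skewAdjoint R) : star u * (a * star b) * u = star a * b := by
  have ha' : star a * u = -(star u * a) := by
    simpa only [star_mul, star_star] using skewAdjoint.mem_iff.mp ha
  have hb' : star b * u = -(star u * b) := by
    simpa only [star_mul, star_star] using skewAdjoint.mem_iff.mp hb
  calc star u * (a * star b) * u = star u * a * (star b * u) := by noncomm_ring
    _ = star a * (u * star u) * b := by rw [← neg_neg (star u * a), ← ha', hb']; noncomm_ring
    _ = star a * b := by rw [hu, mul_one]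

end StarRing

theorem HasDerivAt.star_mul_mem_skewAdjoint {A : Type*} [NormedRing A] [NormedAlgebra ℝ A]
    [StarRing A] [StarModule ℝ A] [ContinuousStar A] {f : ℝ → A} {f' : A} {t : ℝ}
    (hf : HasDerivAt f f' t) (hu : ∀ s, star (f s) * f s = 1) :
    star (f t) * f' ∈ skewAdjoint A := by
  have hconst : HasDerivAt (fun s => star (f s) * f s) 0 t := by
    simpa only [hu] using hasDerivAt_const t (1 : A)
  have hsum : star f' * f t + star (f t) * f' = 0 := (hf.star.mul hf).unique hconst
  rw [skewAdjoint.mem_iff, star_mul, star_star]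
  exact eq_neg_of_add_eq_zero_left hsum

/-- For a twice continuously differentiable unitary-valued family `U(t,θ)` with Hamiltonian
`H = i(∂ₜU)U†`: `H` is Hermitian and the instantaneous pumped power operator equals a total
derivative plus a Berry-curvature term:
`−U†(∂_θ H)U = −i ∂_θ(U†∂ₜU) + i((∂_θU†)(∂ₜU) − (∂ₜU†)(∂_θU))`. -/
theorem pumped_power_eq_total_derivative_plus_berry_curvature {N : ℕ}
    (U : ℝ × ℝ → Matrix (Fin N) (Fin N) ℂ)
    (hU : ContDiff ℝ 2 U)
    (hunit : ∀ p : ℝ × ℝ, (U p)ᴴ * U p = 1) :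
    (∀ p : ℝ × ℝ, (genHam U p)ᴴ = genHam U p) ∧
    ∀ p : ℝ × ℝ,
      -((U p)ᴴ * pdTheta (genHam U) p * U p)
        = (-Complex.I) • pdTheta (fun q => (U q)ᴴ * pdT U q) p
          + Complex.I • (pdTheta (fun q => (U q)ᴴ) p * pdT U p
              - pdT (fun q => (U q)ᴴ) p * pdTheta U p) := by
  have hUd : Differentiable ℝ U := hU.differentiable two_ne_zero
  have hAd : Differentiable ℝ (pdT U) :=
    (contDiff_pdT hU (by norm_num : (1 : WithTop ℕ∞) + 1 ≤ 2)).differentiable one_ne_zero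
  have hUU : ∀ p, U p * (U p)ᴴ = 1 := fun p => mul_eq_one_comm.mp (hunit p)
  have skew_t : ∀ p, (U p)ᴴ * pdT U p ∈ skewAdjoint (Matrix (Fin N) (Fin N) ℂ) := fun p =>
    (hasDerivAt_pdT (hUd p)).star_mul_mem_skewAdjoint fun s => hunit (s, p.2)
  have skew_θ : ∀ p, (U p)ᴴ * pdTheta U p ∈ skewAdjoint (Matrix (Fin N) (Fin N) ℂ) := fun p =>
    (hasDerivAt_pdTheta (hUd p)).star_mul_mem_skewAdjoint fun s => hunit (p.1, s)
  refine ⟨fun p => Complex.isSelfAdjoint_I_smul_iff_mem_skewAdjoint.mpr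
    (mul_star_mem_skewAdjoint_of_star_mul (hUU p) (skew_t p)), fun p => ?_⟩
  have hcurv : (U p)ᴴ * (pdT U p * (pdTheta U p)ᴴ) * U p = (pdT U p)ᴴ * pdTheta U p :=
    star_mul_mul_star_mul_eq (hUU p) (skew_t p) (skew_θ p)
  calc -((U p)ᴴ * pdTheta (genHam U) p * U p)
      = -Complex.I • ((U p)ᴴ * pdTheta (pdT U) p * ((U p)ᴴ * U p)
          + (U p)ᴴ * (pdT U p * (pdTheta U p)ᴴ) * U p) := by
        rw [pdTheta_genHam (hUd p) (hAd p), mul_smul_comm, smul_mul_assoc, neg_smul]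
        simp only [mul_add, add_mul, mul_assoc]
    _ = -Complex.I • ((U p)ᴴ * pdTheta (pdT U) p + (pdT U p)ᴴ * pdTheta U p) := by
        rw [hunit p, mul_one, hcurv]
    _ = _ := by
        rw [pdTheta_mul (U := fun q => (U q)ᴴ) (hUd p).star (hAd p), pdTheta_conjTranspose,
          pdT_conjTranspose]
        module
end

section
/- Let V : ℝ^3 → Matrix (Fin N) (Fin N) ℂ be continuously differentiable, 2π-periodic in each coordinate, with V(θ) unitary for every θ; let H_F be Hermitian, Ω, θ_0 ∈ ℝ^3, θ_t = Ω t + θ_0, and U(t) = V(θ_t) e^{−itH_F} V(θ_0)†. Then the frequency-lattice displacement Δn_j(t) = −i U(t)† ∂_{θ_{0j}} U(t) is uniformly bounded in time: there is a constant C (depending only on V) such that ‖Δn_j(t)‖ ≤ C for all t ∈ ℝ, all j ∈ {1,2,3}, and all θ_0 ∈ ℝ^3. (In a localized phase the photon transfer to each drive remains bounded for all time.) -/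
/-!
Since `U(t)` is unitary, `‖Δn_j(t)‖ = ‖∂_{θ₀ⱼ} U(t)‖`, and the product rule together with the
unitarity of `V` and `e^{−itH_F}` bounds this by `‖∂ⱼV(θ_t)‖ + ‖∂ⱼV(θ₀)‖`. The derivative of `V`
is continuous and `2π`-periodic in every coordinate, so its range is the image of the compact
cube `[0, 2π]³` and hence bounded.
-/

open Matrix
open scoped Matrix.Norms.L2Operator

/-- The Floquet-decomposed propagator `U(t) = V(Ωt + θ₀) e^{−itH_F} V(θ₀)†`, viewed as a
function of the initial phase `θ₀` (its second argument). -/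
noncomputable def floquetU {N : ℕ} (V : (Fin 3 → ℝ) → Matrix (Fin N) (Fin N) ℂ)
    (HF : Matrix (Fin N) (Fin N) ℂ) (Ω : Fin 3 → ℝ) (t : ℝ) (φ : Fin 3 → ℝ) :
    Matrix (Fin N) (Fin N) ℂ :=
  V (t • Ω + φ) * NormedSpace.exp ((-(Complex.I * (t : ℂ))) • HF) * (V φ)ᴴ

open Function

section CoordPeriodic

variable {ι X : Type*} [DecidableEq ι]

def CoordPeriodic (f : (ι → ℝ) → X) (c : ℝ) : Prop :=
  ∀ (k : ι) (θ : ι → ℝ), f (update θ k (θ k + c)) = f θ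

variable {f : (ι → ℝ) → X} {c : ℝ}

lemma CoordPeriodic.periodic_update (h : CoordPeriodic f c) (k : ι) (θ : ι → ℝ) :
    Periodic (fun s => f (update θ k s)) c := fun s => by
  simpa using h k (update θ k s)

lemma CoordPeriodic.exists_mem_pi_Ico_eq [Fintype ι] (h : CoordPeriodic f c) (hc : 0 < c)
    (θ : ι → ℝ) : ∃ θ' ∈ Set.univ.pi fun _ => Set.Ico 0 c, f θ' = f θ := by
  suffices ∀ s : Finset ι, ∃ θ', (∀ k ∈ s, θ' k ∈ Set.Ico 0 c) ∧ f θ' = f θ by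
    obtain ⟨θ', hθ', hf⟩ := this Finset.univ
    exact ⟨θ', fun k _ => hθ' k (Finset.mem_univ k), hf⟩
  intro s
  induction s using Finset.induction_on with
  | empty => exact ⟨θ, by simp, rfl⟩
  | @insert j s hj ih =>
    obtain ⟨θ', hθ', hf⟩ := ih
    obtain ⟨y, hy, hfy⟩ := (h.periodic_update j θ').exists_mem_Ico₀ hc (θ' j)
    refine ⟨update θ' j y, fun k hk => ?_, ?_⟩
    · rcases Finset.mem_insert.1 hk with rfl | hk
      · simpa using hy
      · rw [update_of_ne (ne_of_mem_of_not_mem hk hj)]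
        exact hθ' k hk
    · simp only [update_eq_self] at hfy
      rw [← hfy, hf]

lemma CoordPeriodic.isCompact_range [Fintype ι] [TopologicalSpace X] (h : CoordPeriodic f c)
    (hc : 0 < c) (hf : Continuous f) : IsCompact (Set.range f) := by
  have hcube : Set.range f = f '' Set.univ.pi fun _ => Set.Icc 0 c := by
    refine (Set.range_subset_iff.2 fun θ => ?_).antisymm (Set.image_subset_range _ _)
    obtain ⟨θ', hθ', hfθ⟩ := h.exists_mem_pi_Ico_eq hc θ
    exact ⟨θ', Set.pi_mono (fun _ _ => Set.Ico_subset_Icc_self) hθ', hfθ⟩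
  rw [hcube]
  exact (isCompact_univ_pi fun _ => isCompact_Icc).image hf

lemma update_add_eq_add_single {M : Type*} [AddZeroClass M] (θ : ι → M) (k : ι) (c : M) :
    update θ k (θ k + c) = θ + Pi.single k c := by
  ext i
  rcases eq_or_ne i k with rfl | h <;> simp [update_of_ne, *]

lemma CoordPeriodic.fderiv {F : Type*} [NormedAddCommGroup F] [NormedSpace ℝ F] [Fintype ι]
    {f : (ι → ℝ) → F} (h : CoordPeriodic f c) : CoordPeriodic (fderiv ℝ f) c := by
  intro k θ
  have hf : (fun x => f (x + Pi.single k c)) = f :=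
    funext fun x => by rw [← update_add_eq_add_single]; exact h k x
  rw [update_add_eq_add_single, ← fderiv_comp_add_right, hf]

end CoordPeriodic

lemma matPderiv_eq_fderiv_s12 {N m : ℕ} {V : (Fin m → ℝ) → Matrix (Fin N) (Fin N) ℂ}
    {θ : Fin m → ℝ} (hV : DifferentiableAt ℝ V θ) (j : Fin m) :
    matPderiv j V θ = fderiv ℝ V θ (Pi.single j 1) := by
  rw [← update_eq_self j θ] at hV
  have := (hV.hasFDerivAt.comp_hasDerivAt (θ j) (hasDerivAt_update θ j (θ j))).deriv
  rwa [update_eq_self] at this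

lemma exists_norm_matPderiv_le {N m : ℕ} {V : (Fin m → ℝ) → Matrix (Fin N) (Fin N) ℂ} {c : ℝ}
    (hV : ContDiff ℝ 1 V) (hper : CoordPeriodic V c) (hc : 0 < c) :
    ∃ C, ∀ j θ, ‖matPderiv j V θ‖ ≤ C := by
  obtain ⟨C, hC⟩ := (hper.fderiv.isCompact_range hc
    (hV.continuous_fderiv one_ne_zero)).isBounded.exists_norm_le
  refine ⟨C, fun j θ => ?_⟩
  rw [matPderiv_eq_fderiv_s12 (hV.differentiable one_ne_zero θ)]
  calc _ ≤ ‖fderiv ℝ V θ‖ * ‖(Pi.single j 1 : Fin m → ℝ)‖ := ContinuousLinearMap.le_opNorm _ _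
    _ ≤ C := by
      rw [Pi.norm_single, norm_one, mul_one]
      exact hC _ ⟨θ, rfl⟩

section Floquet

variable {N : ℕ} {V : (Fin 3 → ℝ) → Matrix (Fin N) (Fin N) ℂ} {HF : Matrix (Fin N) (Fin N) ℂ}

lemma matPderiv_floquetU (hV : Differentiable ℝ V) (Ω : Fin 3 → ℝ) (t : ℝ) (j : Fin 3)
    (θ₀ : Fin 3 → ℝ) :
    matPderiv j (floquetU V HF Ω t) θ₀ =
      matPderiv j V (t • Ω + θ₀) * NormedSpace.exp ((-(Complex.I * (t : ℂ))) • HF) * (V θ₀)ᴴ +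
      V (t • Ω + θ₀) * NormedSpace.exp ((-(Complex.I * (t : ℂ))) • HF) * (matPderiv j V θ₀)ᴴ := by
  have hshift : HasFDerivAt (fun φ => V (t • Ω + φ)) (fderiv ℝ V (t • Ω + θ₀)) θ₀ :=
    (hasFDerivAt_comp_add_left (t • Ω)).2 (hV _).hasFDerivAt
  have hU : HasFDerivAt (𝕜 := ℝ) (floquetU V HF Ω t) _ θ₀ :=
    (hshift.mul_const' _).fun_mul' (hV θ₀).hasFDerivAt.star
  rw [matPderiv_eq_fderiv_s12 hU.differentiableAt, hU.fderiv, matPderiv_eq_fderiv_s12 (hV _),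
    matPderiv_eq_fderiv_s12 (hV _), add_comm]
  simp [star_eq_conjTranspose]

lemma exp_neg_I_mul_smul_mem_unitary (hHF : HFᴴ = HF) (t : ℝ) :
    NormedSpace.exp ((-(Complex.I * (t : ℂ))) • HF) ∈ unitary (Matrix (Fin N) (Fin N) ℂ) := by
  -- the L2 operator norm only provides a normed `ℂ`-algebra structure
  let +nondep : NormedAlgebra ℚ (Matrix (Fin N) (Fin N) ℂ) := .restrictScalars ℚ ℂ _
  refine NormedSpace.exp_mem_unitary_of_mem_skewAdjoint
    (IsSelfAdjoint.smul_mem_skewAdjoint ?_ hHF)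
  simp [skewAdjoint.mem_iff]

lemma floquetU_mem_unitary (hunit : ∀ θ, (V θ)ᴴ * V θ = 1) (hHF : HFᴴ = HF) (Ω : Fin 3 → ℝ)
    (t : ℝ) (φ : Fin 3 → ℝ) : floquetU V HF Ω t φ ∈ unitary (Matrix (Fin N) (Fin N) ℂ) :=
  mul_mem (mul_mem (mem_unitaryGroup_iff'.2 (hunit _)) (exp_neg_I_mul_smul_mem_unitary hHF t))
    (Unitary.star_mem (mem_unitaryGroup_iff'.2 (hunit φ)))

lemma norm_matPderiv_floquetU_le (hV : Differentiable ℝ V) (hunit : ∀ θ, (V θ)ᴴ * V θ = 1)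
    (hHF : HFᴴ = HF) (Ω : Fin 3 → ℝ) (t : ℝ) (j : Fin 3) (θ₀ : Fin 3 → ℝ) :
    ‖matPderiv j (floquetU V HF Ω t) θ₀‖ ≤ ‖matPderiv j V (t • Ω + θ₀)‖ + ‖matPderiv j V θ₀‖ := by
  have hVu θ : V θ ∈ unitary (Matrix (Fin N) (Fin N) ℂ) := mem_unitaryGroup_iff'.2 (hunit θ)
  have hVHu : (V θ₀)ᴴ ∈ unitary (Matrix (Fin N) (Fin N) ℂ) := Unitary.star_mem (hVu θ₀)
  have hE := exp_neg_I_mul_smul_mem_unitary hHF t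
  rw [matPderiv_floquetU hV]
  refine (norm_add_le _ _).trans_eq ?_
  rw [CStarRing.norm_mul_mem_unitary _ hVHu, CStarRing.norm_mul_mem_unitary _ hE, mul_assoc,
    CStarRing.norm_mem_unitary_mul _ (hVu _), CStarRing.norm_mem_unitary_mul _ hE,
    l2_opNorm_conjTranspose]

end Floquet

/-- In a localized phase (defined by the existence of the Floquet decomposition
`U(t) = V(θ_t)e^{−itH_F}V(θ₀)†` with `V` continuously differentiable, `2π`-periodic and
unitary-valued), the frequency-lattice displacement `Δn_j(t) = −i U(t)† ∂_{θ₀ⱼ} U(t)` is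
uniformly bounded in operator norm, with a constant independent of `t`, `j`, and `θ₀`:
the photon transfer to each drive remains bounded for all time. -/
theorem freq_lattice_displacement_bounded {N : ℕ}
    (V : (Fin 3 → ℝ) → Matrix (Fin N) (Fin N) ℂ)
    (hV : ContDiff ℝ 1 V)
    (hper : ∀ (j : Fin 3) (θ : Fin 3 → ℝ), V (Function.update θ j (θ j + 2 * Real.pi)) = V θ)
    (hunit : ∀ θ, (V θ)ᴴ * V θ = 1)
    (HF : Matrix (Fin N) (Fin N) ℂ) (hHF : HFᴴ = HF)
    (Ω : Fin 3 → ℝ) :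
    ∃ C : ℝ, ∀ (t : ℝ) (j : Fin 3) (θ₀ : Fin 3 → ℝ),
      ‖(-Complex.I) • ((floquetU V HF Ω t θ₀)ᴴ * matPderiv j (floquetU V HF Ω t) θ₀)‖ ≤ C := by
  obtain ⟨C, hC⟩ := exists_norm_matPderiv_le hV hper Real.two_pi_pos
  refine ⟨2 * C, fun t j θ₀ => ?_⟩
  have hUHu : (floquetU V HF Ω t θ₀)ᴴ ∈ unitary (Matrix (Fin N) (Fin N) ℂ) :=
    Unitary.star_mem (floquetU_mem_unitary hunit hHF Ω t θ₀)
  calc ‖(-Complex.I) • ((floquetU V HF Ω t θ₀)ᴴ * matPderiv j (floquetU V HF Ω t) θ₀)‖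
      = ‖matPderiv j (floquetU V HF Ω t) θ₀‖ := by
        rw [norm_smul, norm_neg, Complex.norm_I, one_mul, CStarRing.norm_mem_unitary_mul _ hUHu]
    _ ≤ ‖matPderiv j V (t • Ω + θ₀)‖ + ‖matPderiv j V θ₀‖ :=
        norm_matPderiv_floquetU_le (hV.differentiable one_ne_zero) hunit hHF Ω t j θ₀
    _ ≤ 2 * C := by linarith [hC j (t • Ω + θ₀), hC j θ₀]
end
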